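/- (One-step oscillation decay, Lemma 2.3 inner step) There is a universal constant c₀ such that for every f ∈ H¹(B_r;ℝ³), every θ ∈ (0,1/2], ∫_{B_{θr}}|f − [f]_{B_{θr}}|² dx ≤ c₀ θ⁵ ∫_{B_r}|f − [f]_{B_r}|² dx + c₀ [θ⁵ + (1+θ)²] r² ∫_{B_r}|∇f|² dx. -/

import Mathlib

/-!
The estimate is a consequence of the Poincaré inequality on the small ball `B_{θr}`,
`∫_{B_s} |f - [f]_{B_s}|² ≤ 2^{n+2} s² ∫_{B_s} |∇f|²`, because `θ² ≤ θ⁵ + (1 + θ)²` and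
`B_{θr} ⊆ B_r`.

For the Poincaré inequality, Jensen bounds `|f(x) - [f]_B|²` by the average over `y ∈ B` of
`|f(x) - f(y)|²`. Split `f(x) - f(y)` at the midpoint `m` of `[x, y]` and bound `|f(x) - f(m)|²`
by `s²` times the integral of `|∇f|²` along `[m, x]`. For fixed `y`, the points of `[m, x]` are
images of `x` under homotheties centred at `y` with ratio in `[1/2, 1]`, so integrating over `x`
costs a factor of at most `2ⁿ`.
-/

open MeasureTheory Metric Set

noncomputable section

abbrev E3 := EuclideanSpace ℝ (Fin 3)

open scoped ENNReal

theorem sq_lintegral_le_lintegral_sq {α : Type*} [MeasurableSpace α] {ν : Measure α}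
    [IsProbabilityMeasure ν] {g : α → ℝ≥0∞} (hg : AEMeasurable g ν) :
    (∫⁻ a, g a ∂ν) ^ 2 ≤ ∫⁻ a, g a ^ 2 ∂ν := by
  have h := eLpNorm_le_eLpNorm_of_exponent_le (p := 1) (q := ((2 : NNReal) : ℝ≥0∞))
    (by norm_num) hg.aestronglyMeasurable
  have h2 := eLpNorm_nnreal_pow_eq_lintegral (μ := ν) (f := g) (p := 2) two_ne_zero
  simp only [eLpNorm_one_eq_lintegral_enorm, enorm_eq_self, NNReal.coe_ofNat,
    ENNReal.rpow_two] at h h2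
  rw [← h2]
  gcongr

theorem enorm_sub_sq_le {F : Type*} [NormedAddCommGroup F] (u v : F) :
    ‖u - v‖ₑ ^ 2 ≤ 2 * (‖u‖ₑ ^ 2 + ‖v‖ₑ ^ 2) :=
  calc ‖u - v‖ₑ ^ 2 ≤ (‖u‖ₑ + ‖v‖ₑ) ^ 2 := by gcongr; exact enorm_sub_le
    _ ≤ 2 * (‖u‖ₑ ^ 2 + ‖v‖ₑ ^ 2) := by
        simp only [enorm_eq_nnnorm]
        exact_mod_cast add_sq_le (a := ‖u‖₊) (b := ‖v‖₊)

theorem ofReal_integral_norm_sq_le {α F : Type*} [MeasurableSpace α] {ν : Measure α}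
    [NormedAddCommGroup F] (g : α → F) :
    ENNReal.ofReal (∫ a, ‖g a‖ ^ 2 ∂ν) ≤ ∫⁻ a, ‖g a‖ₑ ^ 2 ∂ν :=
  calc ENNReal.ofReal (∫ a, ‖g a‖ ^ 2 ∂ν) ≤ ‖∫ a, ‖g a‖ ^ 2 ∂ν‖ₑ := Real.ofReal_le_enorm _
    _ ≤ ∫⁻ a, ‖‖g a‖ ^ 2‖ₑ ∂ν := enorm_integral_le_lintegral_enorm _
    _ = ∫⁻ a, ‖g a‖ₑ ^ 2 ∂ν := by simp only [enorm_pow, enorm_norm]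

theorem ofReal_integral_norm_sq {α F : Type*} [MeasurableSpace α] {ν : Measure α}
    [NormedAddCommGroup F] {g : α → F} (hg : Integrable (fun a => ‖g a‖ ^ 2) ν) :
    ENNReal.ofReal (∫ a, ‖g a‖ ^ 2 ∂ν) = ∫⁻ a, ‖g a‖ₑ ^ 2 ∂ν := by
  rw [ofReal_integral_eq_lintegral_ofReal hg (.of_forall fun _ => sq_nonneg _)]
  simp only [ENNReal.ofReal_pow (norm_nonneg _), ofReal_norm]

section

variable {F : Type*} [NormedAddCommGroup F] [NormedSpace ℝ F] [CompleteSpace F]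

theorem enorm_sub_average_sq_le_laverage {α : Type*} [MeasurableSpace α] {μ : Measure α}
    [IsFiniteMeasure μ] [NeZero μ] {f : α → F} (hf : Integrable f μ) (v : F) :
    ‖v - ⨍ y, f y ∂μ‖ₑ ^ 2 ≤ ⨍⁻ y, ‖v - f y‖ₑ ^ 2 ∂μ := by
  have hv : v - ⨍ y, f y ∂μ = ∫ y, (v - f y) ∂(μ univ)⁻¹ • μ := by
    rw [average_eq', integral_sub (integrable_const v) (hf.smul_measure (by simp [NeZero.ne μ])),
      integral_const, probReal_univ, one_smul]
  rw [hv, laverage_eq']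
  calc ‖∫ y, (v - f y) ∂(μ univ)⁻¹ • μ‖ₑ ^ 2 ≤ (∫⁻ y, ‖v - f y‖ₑ ∂(μ univ)⁻¹ • μ) ^ 2 := by
        gcongr; exact enorm_integral_le_lintegral_enorm _
    _ ≤ _ := sq_lintegral_le_lintegral_sq
        ((aestronglyMeasurable_const.sub hf.aestronglyMeasurable).enorm.smul_measure _)

theorem setLIntegral_enorm_sub_setAverage_sq_le {α : Type*} [MeasurableSpace α] {μ : Measure α}
    {t : Set α} (h0 : μ t ≠ 0) (ht : μ t ≠ ∞) {f : α → F} (hf : IntegrableOn f t μ) :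
    ∫⁻ x in t, ‖f x - ⨍ y in t, f y ∂μ‖ₑ ^ 2 ∂μ ≤
      (μ t)⁻¹ * ∫⁻ x in t, ∫⁻ y in t, ‖f x - f y‖ₑ ^ 2 ∂μ ∂μ := by
  have : IsFiniteMeasure (μ.restrict t) := isFiniteMeasure_restrict.2 ht
  have : NeZero (μ.restrict t) := ⟨by simpa [Measure.restrict_eq_zero] using h0⟩
  calc ∫⁻ x in t, ‖f x - ⨍ y in t, f y ∂μ‖ₑ ^ 2 ∂μ
      ≤ ∫⁻ x in t, ⨍⁻ y in t, ‖f x - f y‖ₑ ^ 2 ∂μ ∂μ :=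
        lintegral_mono fun x => enorm_sub_average_sq_le_laverage hf (f x)
    _ = _ := by
        simp only [laverage_eq, Measure.restrict_apply_univ, div_eq_mul_inv]
        rw [lintegral_mul_const' _ _ (ENNReal.inv_ne_top.2 h0), mul_comm]

theorem enorm_sub_le_lintegral_deriv {g : ℝ → F} {a b : ℝ} (hab : a ≤ b)
    (hg : ∀ t ∈ Icc a b, DifferentiableAt ℝ g t) :
    ‖g b - g a‖ₑ ≤ ∫⁻ t in Icc a b, ‖deriv g t‖ₑ := by
  by_cases hfin : ∫⁻ t in Icc a b, ‖deriv g t‖ₑ = ∞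
  · rw [hfin]; exact le_top
  have hint : IntegrableOn (deriv g) (Icc a b) :=
    ⟨aestronglyMeasurable_deriv g _, lt_top_iff_ne_top.2 hfin⟩
  have hftc : ∫ t in a..b, deriv g t = g b - g a :=
    intervalIntegral.integral_eq_sub_of_hasDerivAt
      (fun t ht => (hg t (uIcc_of_le hab ▸ ht)).hasDerivAt)
      ((intervalIntegrable_iff_integrableOn_Icc_of_le hab).2 hint)
  rw [← hftc, intervalIntegral.integral_of_le hab, restrict_Ioc_eq_restrict_Icc]
  exact enorm_integral_le_lintegral_enorm _

theorem enorm_sub_sq_le_lintegral_deriv_sq {g : ℝ → F}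
    (hg : ∀ t ∈ Icc (0 : ℝ) 1, DifferentiableAt ℝ g t) :
    ‖g 1 - g 0‖ₑ ^ 2 ≤ ∫⁻ t in Icc (0 : ℝ) 1, ‖deriv g t‖ₑ ^ 2 := by
  have : IsProbabilityMeasure (volume.restrict (Icc (0 : ℝ) 1)) := ⟨by simp⟩
  calc ‖g 1 - g 0‖ₑ ^ 2 ≤ (∫⁻ t in Icc (0 : ℝ) 1, ‖deriv g t‖ₑ) ^ 2 := by
        gcongr; exact enorm_sub_le_lintegral_deriv zero_le_one hg
    _ ≤ _ := sq_lintegral_le_lintegral_sq (aestronglyMeasurable_deriv g _).enorm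

end

section

variable {E F : Type*} [NormedAddCommGroup E] [NormedSpace ℝ E] [NormedAddCommGroup F]
  [NormedSpace ℝ F] [CompleteSpace F]

theorem enorm_sub_sq_le_lintegral_fderiv_segment {f : E → F} {x y : E}
    (hf : ∀ t ∈ Icc (0 : ℝ) 1, DifferentiableAt ℝ f (x + t • (y - x))) :
    ‖f y - f x‖ₑ ^ 2 ≤
      ‖y - x‖ₑ ^ 2 * ∫⁻ t in Icc (0 : ℝ) 1, ‖fderiv ℝ f (x + t • (y - x))‖ₑ ^ 2 := by
  have hderiv : ∀ t ∈ Icc (0 : ℝ) 1,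
      HasDerivAt (fun τ : ℝ => f (x + τ • (y - x))) (fderiv ℝ f (x + t • (y - x)) (y - x)) t :=
    fun t ht => (hf t ht).hasFDerivAt.comp_hasDerivAt t
      (((hasDerivAt_id t).smul_const (y - x)).const_add x |>.congr_deriv (one_smul ℝ _))
  have hg := enorm_sub_sq_le_lintegral_deriv_sq fun t ht => (hderiv t ht).differentiableAt
  simp only [one_smul, zero_smul, add_zero, add_sub_cancel] at hg
  rw [← lintegral_const_mul' _ _ (by simp)]
  refine hg.trans (setLIntegral_mono' measurableSet_Icc fun t ht => ?_)
  rw [(hderiv t ht).deriv, mul_comm, ← mul_pow]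
  gcongr
  exact (fderiv ℝ f _).le_opENorm _

def lintegralHalfSegment (G : E → ℝ≥0∞) (y x : E) : ℝ≥0∞ :=
  ∫⁻ t in Icc (0 : ℝ) 1, G (y + ((1 + t) / 2) • (x - y))

variable {f : E → F} {c : E} {s : ℝ}

theorem enorm_sub_midpoint_sq_le (hf : ∀ z ∈ ball c s, DifferentiableAt ℝ f z) {x y : E}
    (hx : x ∈ ball c s) (hy : y ∈ ball c s) :
    ‖f x - f (midpoint ℝ y x)‖ₑ ^ 2 ≤ ENNReal.ofReal s ^ 2 *
      lintegralHalfSegment ((ball c s).indicator fun z => ‖fderiv ℝ f z‖ₑ ^ 2) y x := by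
  set m := midpoint ℝ y x
  have hm : m ∈ ball c s := (convex_ball c s).midpoint_mem hy hx
  have hmem : ∀ t ∈ Icc (0 : ℝ) 1, m + t • (x - m) ∈ ball c s :=
    fun t ht => (convex_ball c s).add_smul_sub_mem hm hx ht
  have hseg : ∀ t : ℝ, m + t • (x - m) = y + ((1 + t) / 2) • (x - y) := by
    intro t
    simp only [m, midpoint_eq_smul_add, invOf_eq_inv]
    module
  have hxm : ‖x - m‖ₑ ≤ ENNReal.ofReal s := by
    rw [← edist_eq_enorm_sub, edist_dist, dist_right_midpoint]
    refine ENNReal.ofReal_le_ofReal ?_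
    have := dist_triangle_right y x c
    rw [mem_ball] at hx hy
    norm_num
    linarith
  calc ‖f x - f m‖ₑ ^ 2
      ≤ ‖x - m‖ₑ ^ 2 * ∫⁻ t in Icc (0 : ℝ) 1, ‖fderiv ℝ f (m + t • (x - m))‖ₑ ^ 2 :=
        enorm_sub_sq_le_lintegral_fderiv_segment fun t ht => hf _ (hmem t ht)
    _ ≤ _ := by
        gcongr
        refine (setLIntegral_congr_fun measurableSet_Icc fun t ht => ?_).le
        rw [← hseg t, indicator_of_mem (hmem t ht)]

end

section

variable {E : Type*} [NormedAddCommGroup E] [NormedSpace ℝ E] [MeasurableSpace E] [BorelSpace E]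
  [FiniteDimensional ℝ E] (μ : Measure E) [μ.IsAddHaarMeasure]

theorem lintegral_comp_homothety {G : E → ℝ≥0∞} (hG : Measurable G) (x : E) {r : ℝ}
    (hr : r ≠ 0) :
    ∫⁻ y, G (x + r • (y - x)) ∂μ =
      ENNReal.ofReal |(r ^ Module.finrank ℝ E)⁻¹| * ∫⁻ y, G y ∂μ := by
  have hshift : Measurable fun z => G (z + (x - r • x)) := hG.comp (measurable_add_const _)
  calc ∫⁻ y, G (x + r • (y - x)) ∂μ = ∫⁻ y, G (r • y + (x - r • x)) ∂μ := by
        congr! 3 with y; module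
    _ = ∫⁻ z, G (z + (x - r • x)) ∂(μ.map (r • ·)) :=
        (lintegral_map hshift (measurable_const_smul r)).symm
    _ = _ := by
        rw [Measure.map_addHaar_smul μ hr, lintegral_smul_measure, smul_eq_mul,
          lintegral_add_right_eq_self G]

theorem measurable_uncurry_lintegralHalfSegment {G : E → ℝ≥0∞} (hG : Measurable G) :
    Measurable (Function.uncurry (lintegralHalfSegment G)) :=
  Measurable.lintegral_prod_right'
    (f := fun p : (E × E) × ℝ => G (p.1.1 + ((1 + p.2) / 2) • (p.1.2 - p.1.1)))
    (hG.comp (by fun_prop : Continuous _).measurable)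

theorem lintegral_lintegralHalfSegment_le {G : E → ℝ≥0∞} (hG : Measurable G) (y : E) :
    ∫⁻ x, lintegralHalfSegment G y x ∂μ ≤ 2 ^ Module.finrank ℝ E * ∫⁻ z, G z ∂μ := by
  have hscale : ∀ t ∈ Icc (0 : ℝ) 1, ∫⁻ x, G (y + ((1 + t) / 2) • (x - y)) ∂μ ≤
      2 ^ Module.finrank ℝ E * ∫⁻ z, G z ∂μ := by
    intro t ht
    have hr : 0 < (1 + t) / 2 := by linarith [ht.1]
    have hinv : (((1 + t) / 2) ^ Module.finrank ℝ E)⁻¹ ≤ 2 ^ Module.finrank ℝ E := by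
      rw [← inv_pow]
      gcongr
      rw [inv_le_comm₀ hr two_pos]
      linarith [ht.1]
    rw [lintegral_comp_homothety μ hG y hr.ne', abs_of_pos (by positivity)]
    gcongr
    calc ENNReal.ofReal (((1 + t) / 2) ^ Module.finrank ℝ E)⁻¹
        ≤ ENNReal.ofReal (2 ^ Module.finrank ℝ E) := ENNReal.ofReal_le_ofReal hinv
      _ = 2 ^ Module.finrank ℝ E := by rw [ENNReal.ofReal_pow zero_le_two]; simp
  calc ∫⁻ x, lintegralHalfSegment G y x ∂μ
      = ∫⁻ t in Icc (0 : ℝ) 1, ∫⁻ x, G (y + ((1 + t) / 2) • (x - y)) ∂μ :=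
        lintegral_lintegral_swap (hG.comp (by fun_prop : Continuous _).measurable).aemeasurable
    _ ≤ ∫⁻ t in Icc (0 : ℝ) 1, 2 ^ Module.finrank ℝ E * ∫⁻ z, G z ∂μ :=
        setLIntegral_mono' measurableSet_Icc hscale
    _ = 2 ^ Module.finrank ℝ E * ∫⁻ z, G z ∂μ := by simp

variable {F : Type*} [NormedAddCommGroup F] [NormedSpace ℝ F] [CompleteSpace F]
  {f : E → F} {c : E} {s : ℝ}

theorem lintegral_lintegral_enorm_sub_sq_le (hf : ∀ z ∈ ball c s, DifferentiableAt ℝ f z) :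
    ∫⁻ x in ball c s, ∫⁻ y in ball c s, ‖f x - f y‖ₑ ^ 2 ∂μ ∂μ ≤
      2 ^ (Module.finrank ℝ E + 2) * ENNReal.ofReal s ^ 2 * μ (ball c s) *
        ∫⁻ z in ball c s, ‖fderiv ℝ f z‖ₑ ^ 2 ∂μ := by
  set G := (ball c s).indicator fun z => ‖fderiv ℝ f z‖ₑ ^ 2
  set H := lintegralHalfSegment G
  set K := ∫⁻ z in ball c s, ‖fderiv ℝ f z‖ₑ ^ 2 ∂μ
  have hG : Measurable G := by unfold G; fun_prop (disch := exact measurableSet_ball)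
  have hH := measurable_uncurry_lintegralHalfSegment hG
  have hpoint : ∀ x ∈ ball c s, ∀ y ∈ ball c s,
      ‖f x - f y‖ₑ ^ 2 ≤ 2 * ENNReal.ofReal s ^ 2 * (H y x + H x y) := by
    intro x hx y hy
    calc ‖f x - f y‖ₑ ^ 2 = ‖(f x - f (midpoint ℝ y x)) - (f y - f (midpoint ℝ x y))‖ₑ ^ 2 := by
          rw [midpoint_comm x y, sub_sub_sub_cancel_right]
      _ ≤ 2 * (ENNReal.ofReal s ^ 2 * H y x + ENNReal.ofReal s ^ 2 * H x y) := by
          refine (enorm_sub_sq_le _ _).trans ?_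
          gcongr
          exacts [enorm_sub_midpoint_sq_le hf hx hy, enorm_sub_midpoint_sq_le hf hy hx]
      _ = _ := by ring
  have hhalf : ∀ x, ∫⁻ y in ball c s, H x y ∂μ ≤ 2 ^ Module.finrank ℝ E * K := fun x =>
    (setLIntegral_le_lintegral _ _).trans <| by
      simpa [G, lintegral_indicator measurableSet_ball] using
        lintegral_lintegralHalfSegment_le μ hG x
  have hfin : 2 * ENNReal.ofReal s ^ 2 ≠ ∞ := by finiteness
  calc ∫⁻ x in ball c s, ∫⁻ y in ball c s, ‖f x - f y‖ₑ ^ 2 ∂μ ∂μ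
      ≤ ∫⁻ x in ball c s, ∫⁻ y in ball c s, 2 * ENNReal.ofReal s ^ 2 * (H y x + H x y) ∂μ ∂μ :=
        setLIntegral_mono' measurableSet_ball fun x hx =>
          setLIntegral_mono' measurableSet_ball fun y hy => hpoint x hx y hy
    _ = 2 * ENNReal.ofReal s ^ 2 * (∫⁻ x in ball c s, ∫⁻ y in ball c s, H y x ∂μ ∂μ +
          ∫⁻ x in ball c s, ∫⁻ y in ball c s, H x y ∂μ ∂μ) := by
        have hmeas : Measurable fun x => ∫⁻ y in ball c s, H y x ∂μ := hH.lintegral_prod_left'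
        rw [← lintegral_add_left hmeas, ← lintegral_const_mul' _ _ hfin]
        refine lintegral_congr fun x => ?_
        have hmeas' : Measurable fun y => H y x := hH.comp (measurable_id.prodMk measurable_const)
        rw [← lintegral_add_left hmeas', lintegral_const_mul' _ _ hfin]
    _ = 2 * ENNReal.ofReal s ^ 2 * (2 * ∫⁻ x in ball c s, ∫⁻ y in ball c s, H x y ∂μ ∂μ) := by
        rw [lintegral_lintegral_swap (f := fun x y => H y x)
          (hH.comp measurable_swap).aemeasurable]
        ring
    _ ≤ 2 * ENNReal.ofReal s ^ 2 * (2 * ∫⁻ _ in ball c s, 2 ^ Module.finrank ℝ E * K ∂μ) := by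
        gcongr with x; exact hhalf x
    _ = _ := by
        rw [setLIntegral_const]
        ring

theorem integral_norm_sub_setAverage_sq_le_ball (hs : 0 < s)
    (hf : ∀ z ∈ ball c s, DifferentiableAt ℝ f z) (hfi : IntegrableOn f (ball c s) μ)
    (hDf : IntegrableOn (fun z => ‖fderiv ℝ f z‖ ^ 2) (ball c s) μ) :
    ∫ x in ball c s, ‖f x - ⨍ y in ball c s, f y ∂μ‖ ^ 2 ∂μ ≤
      2 ^ (Module.finrank ℝ E + 2) * s ^ 2 * ∫ z in ball c s, ‖fderiv ℝ f z‖ ^ 2 ∂μ := by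
  have hB0 : μ (ball c s) ≠ 0 := (measure_ball_pos μ c hs).ne'
  have hBt : μ (ball c s) ≠ ∞ := measure_ball_lt_top.ne
  have hR : 0 ≤ 2 ^ (Module.finrank ℝ E + 2) * s ^ 2 * ∫ z in ball c s, ‖fderiv ℝ f z‖ ^ 2 ∂μ :=
    mul_nonneg (by positivity) (integral_nonneg fun _ => sq_nonneg _)
  rw [← ENNReal.ofReal_le_ofReal_iff hR]
  calc ENNReal.ofReal (∫ x in ball c s, ‖f x - ⨍ y in ball c s, f y ∂μ‖ ^ 2 ∂μ)
      ≤ ∫⁻ x in ball c s, ‖f x - ⨍ y in ball c s, f y ∂μ‖ₑ ^ 2 ∂μ := ofReal_integral_norm_sq_le _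
    _ ≤ (μ (ball c s))⁻¹ * ∫⁻ x in ball c s, ∫⁻ y in ball c s, ‖f x - f y‖ₑ ^ 2 ∂μ ∂μ :=
        setLIntegral_enorm_sub_setAverage_sq_le hB0 hBt hfi
    _ ≤ (μ (ball c s))⁻¹ * (2 ^ (Module.finrank ℝ E + 2) * ENNReal.ofReal s ^ 2 *
          μ (ball c s) * ∫⁻ z in ball c s, ‖fderiv ℝ f z‖ₑ ^ 2 ∂μ) := by
        gcongr; exact lintegral_lintegral_enorm_sub_sq_le μ hf
    _ = 2 ^ (Module.finrank ℝ E + 2) * ENNReal.ofReal s ^ 2 *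
          ∫⁻ z in ball c s, ‖fderiv ℝ f z‖ₑ ^ 2 ∂μ := by
        rw [show ∀ a b : ℝ≥0∞, (μ (ball c s))⁻¹ * (a * μ (ball c s) * b) =
            a * b * ((μ (ball c s))⁻¹ * μ (ball c s)) from fun a b => by ring,
          ENNReal.inv_mul_cancel hB0 hBt, mul_one]
    _ = _ := by
        rw [ENNReal.ofReal_mul (by positivity), ENNReal.ofReal_mul (by positivity),
          ENNReal.ofReal_pow hs.le, ofReal_integral_norm_sq hDf]
        simp

end

/-- One-step oscillation decay (inner step of Lemma 2.3): for `f ∈ H¹(B_r;ℝ³)` and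
`θ ∈ (0,1/2]`,
`∫_{B_{θr}}|f−[f]_{B_{θr}}|² ≤ c₀θ⁵∫_{B_r}|f−[f]_{B_r}|² + c₀[θ⁵+(1+θ)²] r² ∫_{B_r}|∇f|²`. -/
theorem stmt_9 :
    ∃ c₀ : ℝ, 0 < c₀ ∧ ∀ (r : ℝ), 0 < r → ∀ θ ∈ Ioc (0:ℝ) (1/2), ∀ f : E3 → E3,
      (∀ x ∈ ball (0:E3) r, DifferentiableAt ℝ f x) →
      IntegrableOn f (ball (0:E3) r) →
      IntegrableOn (fun x => ‖f x‖^2) (ball (0:E3) r) →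
      IntegrableOn (fun x => ‖fderiv ℝ f x‖^2) (ball (0:E3) r) →
      (∫ x in ball (0:E3) (θ*r), ‖f x - ⨍ y in ball (0:E3) (θ*r), f y‖^2) ≤
        c₀ * θ^5 * (∫ x in ball (0:E3) r, ‖f x - ⨍ y in ball (0:E3) r, f y‖^2)
        + c₀ * (θ^5 + (1+θ)^2) * r^2 * ∫ x in ball (0:E3) r, ‖fderiv ℝ f x‖^2 := by
  refine ⟨32, by norm_num, fun r hr θ hθ f hf hfi _ hDf => ?_⟩
  have hsub : ball (0 : E3) (θ * r) ⊆ ball 0 r :=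
    ball_subset_ball (mul_le_of_le_one_left hr.le (by linarith [hθ.2]))
  have hpoincare := integral_norm_sub_setAverage_sq_le_ball volume (mul_pos hθ.1 hr)
    (fun z hz => hf z (hsub hz)) (hfi.mono_set hsub) (hDf.mono_set hsub)
  have hDf_mono : ∫ x in ball (0 : E3) (θ * r), ‖fderiv ℝ f x‖ ^ 2 ≤
      ∫ x in ball (0 : E3) r, ‖fderiv ℝ f x‖ ^ 2 :=
    setIntegral_mono_set hDf (ae_of_all _ fun _ => by positivity) hsub.eventuallyLE
  have hθ_sq : θ ^ 2 ≤ θ ^ 5 + (1 + θ) ^ 2 := by nlinarith [pow_pos hθ.1 5, hθ.1]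
  rw [finrank_euclideanSpace_fin] at hpoincare
  calc _ ≤ 32 * θ ^ 2 * r ^ 2 * ∫ x in ball (0 : E3) (θ * r), ‖fderiv ℝ f x‖ ^ 2 := by
        convert hpoincare using 1; ring
    _ ≤ 32 * (θ ^ 5 + (1 + θ) ^ 2) * r ^ 2 * ∫ x in ball (0 : E3) r, ‖fderiv ℝ f x‖ ^ 2 := by
        gcongr
        exact mul_nonneg (mul_nonneg (by norm_num) ((sq_nonneg θ).trans hθ_sq)) (sq_nonneg r)
    _ ≤ _ := le_add_of_nonneg_left <|
        mul_nonneg (mul_nonneg (by norm_num) (pow_nonneg hθ.1.le 5))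
          (integral_nonneg fun _ => sq_nonneg _)
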